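/- Let a, b be real numbers with 3 ≤ a < b, and suppose there exists z_0 ∈ [0, a] such that φ_{a,b}(z_0) ≤ 0. Then for every odd integer j = 2m+1, m ≥ 1, one has φ_{a,b}(r_j) ≤ 0, where r_j := q_2 q_3 ⋯ q_j z_0 = (ab)^m z_0. -/

import Mathlib

open scoped Classical

/-- Taylor coefficients of `f_{a,b}`: `a₀ = a₁ = 1`,
`aₖ = aₖ₋₁² / (aₖ₋₂ · qₖ)` where `qₖ = a` for even `k` and `qₖ = b` for odd `k`. -/
noncomputable def coeffAB (a b : ℝ) : ℕ → ℝ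
  | 0 => 1
  | 1 => 1
  | n + 2 => (coeffAB a b (n + 1)) ^ 2 / (coeffAB a b n * (if Even n then a else b))

/-- The entire function `f_{a,b}(z) = Σ aₖ zᵏ` (as a function on `ℂ`). -/
noncomputable def fAB (a b : ℝ) (z : ℂ) : ℂ := ∑' k : ℕ, (coeffAB a b k : ℂ) * z ^ k

/-- The restriction of `f_{a,b}` to the reals. -/
noncomputable def fABReal (a b x : ℝ) : ℝ := ∑' k : ℕ, coeffAB a b k * x ^ k

/-- `φ_{a,b}(x) = f_{a,b}(-x) = Σ (-1)ᵏ aₖ xᵏ` (real variable). -/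
noncomputable def phiAB (a b x : ℝ) : ℝ := ∑' k : ℕ, (-1 : ℝ) ^ k * coeffAB a b k * x ^ k

/-- `φ_{a,b}` as a function of a complex variable. -/
noncomputable def phiABC (a b : ℝ) (z : ℂ) : ℂ :=
  ∑' k : ℕ, (-1 : ℂ) ^ k * (coeffAB a b k : ℂ) * z ^ k

/-- Membership in the Laguerre–Pólya class of type I:
`f(z) = c zⁿ e^{βz} ∏ (1 + z/xₖ)` with `c ∈ ℝ`, `β ≥ 0`, `xₖ > 0`, `Σ 1/xₖ < ∞`
(the product over a countable — possibly finite or empty — index set). -/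
def LaguerrePolyaI (f : ℂ → ℂ) : Prop :=
  ∃ (c : ℝ) (n : ℕ) (β : ℝ) (ι : Type) (_ : Countable ι) (x : ι → ℝ),
    0 ≤ β ∧ (∀ i, 0 < x i) ∧ Summable (fun i => (x i)⁻¹) ∧
    ∀ z : ℂ, f z = (c : ℂ) * z ^ n * Complex.exp (β * z) * ∏' i, (1 + z / (x i : ℂ))

/-- The partial theta function `g_t(z) = Σ zᵏ t^{-k²}` (complex variable). -/
noncomputable def partialTheta (t : ℝ) (z : ℂ) : ℂ := ∑' k : ℕ, z ^ k / (t : ℂ) ^ (k ^ 2)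

/-- The partial theta function restricted to the reals. -/
noncomputable def partialThetaReal (t x : ℝ) : ℝ := ∑' k : ℕ, x ^ k / t ^ (k ^ 2)

/-- A function `f : ℂ → ℂ` has only real zeros. -/
def OnlyRealZeros (f : ℂ → ℂ) : Prop := ∀ z : ℂ, f z = 0 → ∃ r : ℝ, z = (r : ℂ)

/-- The constant `q_∞ ≈ 3.2336…`: the infimum of the set
`{t² : t > 1 and g_t has only real zeros}`. -/
noncomputable def qInfty : ℝ :=
  sInf {s : ℝ | ∃ t : ℝ, 1 < t ∧ s = t ^ 2 ∧ OnlyRealZeros (partialTheta t)}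

/-!
The coefficients satisfy `a_k = a (ab)^k a_{k+2}`, which turns into the functional equation
`φ(abx) = 1 - abx + ab²x² φ(x)`. Hence `x ≥ 1` and `φ(x) ≤ 0` give `φ(abx) ≤ 1 - abx < 0`, and
the property propagates along `x, abx, (ab)²x, …`. It starts at `z₀`, because the alternating
series bound `φ(x) ≥ 1 - x` on `[0, 1]` forces `z₀ ≥ 1`.
-/

open Filter

section Coefficients

variable {a b : ℝ}

lemma coeffAB_add_two (a b : ℝ) (n : ℕ) :
    coeffAB a b (n + 2) =
      coeffAB a b (n + 1) ^ 2 / (coeffAB a b n * if Even n then a else b) := by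
  rw [coeffAB]

lemma coeffAB_pos (ha : 0 < a) (hb : 0 < b) : ∀ n, 0 < coeffAB a b n
  | 0 => by simp [coeffAB]
  | 1 => by simp [coeffAB]
  | n + 2 => by
    have h₀ := coeffAB_pos ha hb n
    have h₁ := coeffAB_pos ha hb (n + 1)
    have hq : 0 < if Even n then a else b := by split_ifs <;> assumption
    rw [coeffAB_add_two]
    positivity

lemma coeffAB_succ_mul_pow_le {t : ℝ} (ht : 0 < t) (hta : t ≤ a) (htb : t ≤ b) (n : ℕ) :
    coeffAB a b (n + 1) * t ^ n ≤ coeffAB a b n := by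
  induction n with
  | zero => simp [coeffAB]
  | succ n ih =>
    have hq : t ≤ if Even n then a else b := by split_ifs <;> assumption
    have h₀ := coeffAB_pos (ht.trans_le hta) (ht.trans_le htb) n
    have h₁ := coeffAB_pos (ht.trans_le hta) (ht.trans_le htb) (n + 1)
    rw [coeffAB_add_two, div_mul_eq_mul_div, div_le_iff₀ (mul_pos h₀ (ht.trans_le hq))]
    calc coeffAB a b (n + 1) ^ 2 * t ^ (n + 1)
        = coeffAB a b (n + 1) * (coeffAB a b (n + 1) * t ^ n) * t := by ring
      _ ≤ coeffAB a b (n + 1) * coeffAB a b n * (if Even n then a else b) := by gcongr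
      _ = _ := by ring

lemma coeffAB_add_three_mul (ha : 0 < a) (hb : 0 < b) (n : ℕ) :
    coeffAB a b (n + 3) * coeffAB a b n * (a * b) = coeffAB a b (n + 2) * coeffAB a b (n + 1) := by
  have hq : (if Even n then a else b) * (if Even (n + 1) then a else b) = a * b := by
    rcases Nat.even_or_odd n with hn | hn
    · simp [hn, Nat.even_add_one]
    · simp [Nat.not_even_iff_odd.mpr hn, Nat.even_add_one, mul_comm]
  have h₀ := (coeffAB_pos ha hb n).ne'
  have h₁ := (coeffAB_pos ha hb (n + 1)).ne'
  have hq₀ : (if Even n then a else b) ≠ 0 := by split_ifs <;> positivity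
  have h₂ : coeffAB a b (n + 2) * (coeffAB a b n * if Even n then a else b) =
      coeffAB a b (n + 1) ^ 2 := by
    rw [coeffAB_add_two]
    field_simp
  rw [coeffAB_add_two a b (n + 1), ← hq]
  field_simp
  linear_combination coeffAB a b (n + 2) * h₂

lemma coeffAB_eq_mul_coeffAB_add_two (ha : 0 < a) (hb : 0 < b) (n : ℕ) :
    coeffAB a b n = a * (a * b) ^ n * coeffAB a b (n + 2) := by
  induction n with
  | zero => simp [coeffAB, ha.ne']
  | succ n ih =>
    apply mul_left_cancel₀ (coeffAB_pos ha hb n).ne'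
    linear_combination coeffAB a b (n + 1) * ih - a * (a * b) ^ n * coeffAB_add_three_mul ha hb n

lemma summable_coeffAB_mul_pow (ha : 1 < a) (hb : 1 < b) (x : ℝ) :
    Summable fun k ↦ coeffAB a b k * x ^ k := by
  have hc := coeffAB_pos (a := a) (b := b) (by linarith) (by linarith)
  refine summable_of_ratio_norm_eventually_le (r := 1 / 2) (by norm_num) ?_
  filter_upwards [(tendsto_pow_atTop_atTop_of_one_lt (lt_min ha hb)).eventually_ge_atTop
    (2 * |x|)] with n hn
  have hratio := coeffAB_succ_mul_pow_le (by linarith [lt_min ha hb]) (min_le_left a b)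
    (min_le_right a b) n
  simp only [norm_mul, norm_pow, Real.norm_eq_abs, abs_of_pos (hc _)]
  calc coeffAB a b (n + 1) * |x| ^ (n + 1) = coeffAB a b (n + 1) * |x| * |x| ^ n := by ring
    _ ≤ coeffAB a b (n + 1) * (min a b ^ n / 2) * |x| ^ n := by
      have := (hc (n + 1)).le
      gcongr
      linarith
    _ = 1 / 2 * (coeffAB a b (n + 1) * min a b ^ n) * |x| ^ n := by ring
    _ ≤ 1 / 2 * (coeffAB a b n * |x| ^ n) := by rw [mul_assoc]; gcongr

end Coefficients

section Phi

variable {a b : ℝ}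

lemma summable_phiAB (ha : 1 < a) (hb : 1 < b) (x : ℝ) :
    Summable fun k ↦ (-1 : ℝ) ^ k * coeffAB a b k * x ^ k := by
  simpa only [mul_assoc] using (summable_coeffAB_mul_pow ha hb x).alternating

theorem phiAB_mul (ha : 1 < a) (hb : 1 < b) (x : ℝ) :
    phiAB a b (a * b * x) = 1 - a * b * x + a * b ^ 2 * x ^ 2 * phiAB a b x := by
  rw [phiAB, ← (summable_phiAB ha hb _).sum_add_tsum_nat_add 2, phiAB, ← tsum_mul_left]
  congr 1
  · simp only [Finset.sum_range_succ, Finset.range_one, Finset.sum_singleton, coeffAB]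
    ring
  · congr 1 with k
    rw [coeffAB_eq_mul_coeffAB_add_two (by linarith) (by linarith) k]
    ring

lemma one_sub_le_phiAB (ha : 1 < a) (hb : 1 < b) {x : ℝ} (hx₀ : 0 ≤ x) (hx₁ : x ≤ 1) :
    1 - x ≤ phiAB a b x := by
  have hanti : Antitone fun k ↦ coeffAB a b k * x ^ k := by
    refine antitone_nat_of_succ_le fun n ↦ ?_
    have hc := coeffAB_succ_mul_pow_le one_pos ha.le hb.le n
    rw [one_pow, mul_one] at hc
    calc coeffAB a b (n + 1) * x ^ (n + 1) ≤ coeffAB a b (n + 1) * x ^ n :=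
          mul_le_mul_of_nonneg_left (pow_le_pow_of_le_one hx₀ hx₁ n.le_succ)
            (coeffAB_pos (by linarith) (by linarith) _).le
      _ ≤ coeffAB a b n * x ^ n := by gcongr
  have hle := hanti.alternating_series_le_tendsto
    (summable_coeffAB_mul_pow ha hb x).tendsto_alternating_series_tsum 1
  simpa [phiAB, mul_assoc, Finset.sum_range_succ, coeffAB, sub_eq_add_neg] using hle

lemma phiAB_mul_nonpos (ha : 1 < a) (hb : 1 < b) {x : ℝ} (hx : 1 ≤ x)
    (hφ : phiAB a b x ≤ 0) : phiAB a b (a * b * x) ≤ 0 := by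
  have habx : 1 ≤ a * b * x := one_le_mul_of_one_le_of_one_le (by nlinarith) hx
  have htail : a * b ^ 2 * x ^ 2 * phiAB a b x ≤ 0 :=
    mul_nonpos_of_nonneg_of_nonpos (by positivity) hφ
  rw [phiAB_mul ha hb]
  linarith

lemma phiAB_pow_mul_nonpos (ha : 1 < a) (hb : 1 < b) {x : ℝ} (hx : 1 ≤ x)
    (hφ : phiAB a b x ≤ 0) (m : ℕ) : phiAB a b ((a * b) ^ m * x) ≤ 0 := by
  induction m with
  | zero => simpa using hφ
  | succ m ih =>
    rw [pow_succ', mul_assoc]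
    exact phiAB_mul_nonpos ha hb (one_le_mul_of_one_le_of_one_le
      (one_le_pow₀ (by nlinarith)) hx) ih

end Phi

theorem phiAB_nonpos_at_r_general (a b : ℝ) (ha : 3 ≤ a) (hab : a < b) (z₀ : ℝ)
    (hz₀ : z₀ ∈ Set.Icc (0 : ℝ) a) (h : phiAB a b z₀ ≤ 0) (m : ℕ) :
    phiAB a b ((a * b) ^ m * z₀) ≤ 0 := by
  have ha₁ : 1 < a := by linarith
  have hb₁ : 1 < b := by linarith
  have hz₀₁ : 1 ≤ z₀ := by
    by_contra! hlt
    linarith [one_sub_le_phiAB ha₁ hb₁ hz₀.1 hlt.le]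
  exact phiAB_pow_mul_nonpos ha₁ hb₁ hz₀₁ h m

/-- For `3 ≤ a < b`, if `φ_{a,b}(z₀) ≤ 0` for some `z₀ ∈ [0, a]`,
then for every odd `j = 2m + 1`, `m ≥ 1`, one has `φ_{a,b}(r_j) ≤ 0` where
`r_j = (ab)ᵐ z₀`. -/
theorem phiAB_nonpos_at_r (a b : ℝ) (ha : 3 ≤ a) (hab : a < b) (z₀ : ℝ)
    (hz₀ : z₀ ∈ Set.Icc (0 : ℝ) a) (h : phiAB a b z₀ ≤ 0) (m : ℕ) (hm : 1 ≤ m) :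
    phiAB a b ((a * b) ^ m * z₀) ≤ 0 :=
  phiAB_nonpos_at_r_general a b ha hab z₀ hz₀ h m
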